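/- arXiv:1909.09313 — 3 statements merged into one kernel-verified Lean document; each statement's English description precedes it below -/
import Mathlib

section
/- If g : ℝⁿ → ℝ is convex and differentiable with L-Lipschitz continuous gradient (L > 0), then ∇g is (1/L)-cocoercive, i.e., for all x, y: ⟨∇g(x) - ∇g(y), x - y⟩ ≥ (1/L)‖∇g(x) - ∇g(y)‖². -/
/-!
Convexity gives the tangent lower bound `f z ≥ f x + ⟪∇f x, z - x⟫`, and an `L`-Lipschitz
gradient gives the quadratic upper bound `f z ≤ f y + ⟪∇f y, z - y⟫ + L/2 ‖z - y‖²`.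
Evaluating both at the gradient step `z = y - (∇f y - ∇f x) / L` yields
`f y ≥ f x + ⟪∇f x, y - x⟫ + ‖∇f y - ∇f x‖² / (2L)`; adding this to the same inequality
with `x` and `y` swapped gives cocoercivity.
-/

open RealInnerProductSpace Set AffineMap

variable {E : Type*} [NormedAddCommGroup E] [InnerProductSpace ℝ E] [CompleteSpace E]
  {f : E → ℝ}

theorem HasGradientAt.hasDerivAt_comp_lineMap {v x y : E} {t : ℝ}
    (hf : HasGradientAt f v (lineMap x y t)) :
    HasDerivAt (f ∘ lineMap x y) ⟪v, y - x⟫ t :=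
  (hf.hasFDerivAt.comp_hasDerivAt t hasDerivAt_lineMap).congr_deriv (by simp)

theorem ConvexOn.add_inner_le_of_hasGradientAt (hconv : ConvexOn ℝ univ f) {v x : E}
    (hf : HasGradientAt f v x) (y : E) : f x + ⟪v, y - x⟫ ≤ f y := by
  have hline : ConvexOn ℝ univ (f ∘ lineMap (k := ℝ) x y) := by
    simpa using hconv.comp_affineMap (lineMap x y)
  have hderiv : HasDerivAt (f ∘ lineMap x y) ⟪v, y - x⟫ (0 : ℝ) :=
    HasGradientAt.hasDerivAt_comp_lineMap (by simpa using hf)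
  have hslope := hline.le_slope_of_hasDerivAt (mem_univ 0) (mem_univ 1) one_pos hderiv
  simp only [slope_def_field, Function.comp_apply, lineMap_apply_one, lineMap_apply_zero,
    sub_zero, div_one] at hslope
  linarith

theorem le_add_inner_add_sq_of_lipschitz_gradient {f' : E → E} {L : ℝ}
    (hf : ∀ x, HasGradientAt f (f' x) x) (hlip : ∀ x y, ‖f' x - f' y‖ ≤ L * ‖x - y‖) (x y : E) :
    f y ≤ f x + ⟪f' x, y - x⟫ + L / 2 * ‖y - x‖ ^ 2 := by
  set B : ℝ → ℝ := fun t => f x + t * ⟪f' x, y - x⟫ + L / 2 * t ^ 2 * ‖y - x‖ ^ 2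
  have hderiv (t : ℝ) : HasDerivAt (f ∘ lineMap x y) ⟪f' (lineMap x y t), y - x⟫ t :=
    (hf _).hasDerivAt_comp_lineMap
  have hB (t : ℝ) : HasDerivAt B (⟪f' x, y - x⟫ + L * t * ‖y - x‖ ^ 2) t := by
    refine (((hasDerivAt_mul_const _).const_add (f x)).add
      (((hasDerivAt_pow 2 t).const_mul (L / 2)).mul_const (‖y - x‖ ^ 2))).congr_deriv ?_
    ring
  have hslope {t : ℝ} (ht : 0 ≤ t) :
      ⟪f' (lineMap x y t), y - x⟫ ≤ ⟪f' x, y - x⟫ + L * t * ‖y - x‖ ^ 2 := by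
    have hdist : ‖lineMap x y t - x‖ = t * ‖y - x‖ := by
      rw [← vsub_eq_sub, lineMap_vsub_left, norm_smul, Real.norm_of_nonneg ht, vsub_eq_sub]
    calc ⟪f' (lineMap x y t), y - x⟫
        = ⟪f' x, y - x⟫ + ⟪f' (lineMap x y t) - f' x, y - x⟫ := by rw [inner_sub_left]; ring
      _ ≤ ⟪f' x, y - x⟫ + ‖f' (lineMap x y t) - f' x‖ * ‖y - x‖ := by
        gcongr; exact real_inner_le_norm _ _
      _ ≤ ⟪f' x, y - x⟫ + L * ‖lineMap x y t - x‖ * ‖y - x‖ := by gcongr; exact hlip _ _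
      _ = ⟪f' x, y - x⟫ + L * t * ‖y - x‖ ^ 2 := by rw [hdist]; ring
  have key := image_le_of_deriv_right_le_deriv_boundary
    (fun t _ => (hderiv t).continuousAt.continuousWithinAt)
    (fun t _ => (hderiv t).hasDerivWithinAt) (by simp [B])
    (fun t _ => (hB t).continuousAt.continuousWithinAt)
    (fun t _ => (hB t).hasDerivWithinAt) (fun t ht => hslope ht.1) (right_mem_Icc.2 zero_le_one)
  simpa [B] using key

theorem ConvexOn.add_inner_add_sq_norm_sub_div_le {f' : E → E} {L : ℝ} (hL : 0 < L)
    (hconv : ConvexOn ℝ univ f) (hf : ∀ x, HasGradientAt f (f' x) x)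
    (hlip : ∀ x y, ‖f' x - f' y‖ ≤ L * ‖x - y‖) (x y : E) :
    f x + ⟪f' x, y - x⟫ + ‖f' y - f' x‖ ^ 2 / (2 * L) ≤ f y := by
  set w := f' y - f' x
  set z := y - L⁻¹ • w
  have htangent := hconv.add_inner_le_of_hasGradientAt (hf x) z
  have hdescent := le_add_inner_add_sq_of_lipschitz_gradient hf hlip y z
  have hstep : z - y = -(L⁻¹ • w) := sub_sub_cancel_left y _
  have hsplit : ⟪f' x, z - x⟫ = ⟪f' x, y - x⟫ + ⟪f' x, z - y⟫ := by
    rw [← inner_add_right, sub_add_sub_cancel']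
  have hinner : ⟪f' y, z - y⟫ - ⟪f' x, z - y⟫ = -(‖w‖ ^ 2 / L) := by
    rw [← inner_sub_left, hstep, inner_neg_right, real_inner_smul_right,
      real_inner_self_eq_norm_sq, inv_mul_eq_div]
  have hnorm : L / 2 * ‖z - y‖ ^ 2 = ‖w‖ ^ 2 / L - ‖w‖ ^ 2 / (2 * L) := by
    rw [hstep, norm_neg, norm_smul, Real.norm_of_nonneg (inv_nonneg.2 hL.le)]
    field_simp
    ring
  linarith

theorem baillon_haddad {n : ℕ} (g : EuclideanSpace ℝ (Fin n) → ℝ)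
    (g' : EuclideanSpace ℝ (Fin n) → EuclideanSpace ℝ (Fin n)) (L : ℝ) (hL : 0 < L)
    (hconv : ConvexOn ℝ Set.univ g)
    (hgrad : ∀ x, HasGradientAt g (g' x) x)
    (hlip : ∀ x y, ‖g' x - g' y‖ ≤ L * ‖x - y‖) :
    ∀ x y : EuclideanSpace ℝ (Fin n),
      (1 / L) * ‖g' x - g' y‖ ^ 2 ≤ ⟪g' x - g' y, x - y⟫ := by
  intro x y
  have hxy := hconv.add_inner_add_sq_norm_sub_div_le hL hgrad hlip x y
  have hyx := hconv.add_inner_add_sq_norm_sub_div_le hL hgrad hlip y x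
  have hinner : ⟪g' x - g' y, x - y⟫ = -⟪g' x, y - x⟫ - ⟪g' y, x - y⟫ := by
    rw [inner_sub_left, ← neg_sub y x, inner_neg_right]
  have hsum : ‖g' y - g' x‖ ^ 2 / (2 * L) + ‖g' x - g' y‖ ^ 2 / (2 * L)
      = 1 / L * ‖g' x - g' y‖ ^ 2 := by
    rw [norm_sub_rev]; field_simp; ring
  linarith
end

section
/- If g : ℝⁿ → ℝ is convex and differentiable with L-Lipschitz gradient, then the operator x ↦ x - (2/L)∇g(x) is nonexpansive. -/
/-!
Baillon–Haddad: a convex function whose gradient is `L`-Lipschitz has a cocoercive gradient,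
`‖∇g x - ∇g y‖² ≤ L ⟪∇g x - ∇g y, x - y⟫`. To see it, evaluate `g` at
`z = x - L⁻¹ (∇g x - ∇g y)`, bounding `g z` below by the supporting hyperplane at `y` and above
by the quadratic upper bound (descent lemma) at `x`; symmetrising in `x, y` gives cocoercivity.
With `u = x - y` and `d = ∇g x - ∇g y`, the identity
`‖u - (2/L) d‖² = ‖u‖² - (4/L²)(L ⟪d, u⟫ - ‖d‖²)` then shows the step is nonexpansive.
-/

open Set RealInnerProductSpace

variable {E : Type*} [NormedAddCommGroup E] [InnerProductSpace ℝ E] {f : E → ℝ}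

theorem norm_sub_two_div_smul_le {L : ℝ} (hL : 0 < L) {u d : E} (hd : ‖d‖ ^ 2 ≤ L * ⟪d, u⟫) :
    ‖u - (2 / L) • d‖ ≤ ‖u‖ := by
  have hsq : ‖u - (2 / L) • d‖ ^ 2 = ‖u‖ ^ 2 - 4 / L ^ 2 * (L * ⟪d, u⟫ - ‖d‖ ^ 2) := by
    rw [norm_sub_sq_real, real_inner_smul_right, norm_smul, mul_pow, Real.norm_eq_abs, sq_abs,
      real_inner_comm]
    field_simp
    ring
  have hgap : 0 ≤ 4 / L ^ 2 * (L * ⟪d, u⟫ - ‖d‖ ^ 2) := by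
    have := sub_nonneg.mpr hd
    positivity
  refine (pow_le_pow_iff_left₀ (norm_nonneg _) (norm_nonneg _) two_ne_zero).mp ?_
  linarith

theorem ConvexOn.comp_add_smul (hf : ConvexOn ℝ univ f) (x v : E) :
    ConvexOn ℝ univ (fun s : ℝ => f (x + s • v)) := by
  have hline : (fun s : ℝ => f (x + s • v)) = f ∘ AffineMap.lineMap x (x + v) := by
    ext s
    simp [AffineMap.lineMap_apply, add_comm]
  rw [hline]
  simpa using hf.comp_affineMap (AffineMap.lineMap x (x + v))

variable [CompleteSpace E] {f' : E → E} {L : ℝ}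

theorem HasGradientAt.hasDerivAt_comp_add_smul {x v d : E} {t : ℝ}
    (h : HasGradientAt f d (x + t • v)) :
    HasDerivAt (fun s : ℝ => f (x + s • v)) ⟪d, v⟫ t := by
  have hline : HasDerivAt (fun s : ℝ => x + s • v) v t := by
    simpa using ((hasDerivAt_id t).smul_const v).const_add x
  simpa [Function.comp_def] using h.hasFDerivAt.comp_hasDerivAt t hline

theorem ConvexOn.add_inner_sub_le (hf : ConvexOn ℝ univ f) {x d : E} (hd : HasGradientAt f d x)
    (y : E) : f x + ⟪d, y - x⟫ ≤ f y := by
  have hd0 : HasDerivAt (fun s : ℝ => f (x + s • (y - x))) ⟪d, y - x⟫ 0 :=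
    HasGradientAt.hasDerivAt_comp_add_smul (by simpa using hd)
  have h := (hf.comp_add_smul x (y - x)).le_slope_of_hasDerivAt (mem_univ 0) (mem_univ 1)
    zero_lt_one hd0
  simp only [slope_def_field, zero_smul, add_zero, one_smul, add_sub_cancel, sub_zero,
    div_one] at h
  linarith

theorem le_add_inner_add_of_lipschitz_gradient (hgrad : ∀ x, HasGradientAt f (f' x) x)
    (hlip : ∀ x y, ‖f' x - f' y‖ ≤ L * ‖x - y‖) (x y : E) :
    f y ≤ f x + ⟪f' x, y - x⟫ + L / 2 * ‖y - x‖ ^ 2 := by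
  set v := y - x
  let φ : ℝ → ℝ := fun t => f (x + t • v) - t * ⟪f' x, v⟫ - L / 2 * t ^ 2 * ‖v‖ ^ 2
  have hφ : ∀ t : ℝ, HasDerivAt φ (⟪f' (x + t • v) - f' x, v⟫ - L * t * ‖v‖ ^ 2) t := by
    intro t
    have h := (((hgrad (x + t • v)).hasDerivAt_comp_add_smul).sub ((hasDerivAt_id t).mul_const
      ⟪f' x, v⟫)).sub ((((hasDerivAt_pow 2 t).const_mul (L / 2))).mul_const (‖v‖ ^ 2))
    refine h.congr_deriv ?_
    rw [inner_sub_left]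
    ring
  have hφ' : ∀ t ∈ interior (Icc (0 : ℝ) 1),
      ⟪f' (x + t • v) - f' x, v⟫ - L * t * ‖v‖ ^ 2 ≤ 0 := by
    intro t ht
    rw [interior_Icc] at ht
    rw [sub_nonpos]
    have hnorm : ‖(x + t • v) - x‖ = t * ‖v‖ := by
      rw [add_sub_cancel_left, norm_smul, Real.norm_of_nonneg ht.1.le]
    calc ⟪f' (x + t • v) - f' x, v⟫ ≤ ‖f' (x + t • v) - f' x‖ * ‖v‖ := real_inner_le_norm _ _
      _ ≤ L * (t * ‖v‖) * ‖v‖ := by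
          rw [← hnorm]; exact mul_le_mul_of_nonneg_right (hlip _ _) (norm_nonneg v)
      _ = L * t * ‖v‖ ^ 2 := by ring
  have hanti : AntitoneOn φ (Icc 0 1) :=
    antitoneOn_of_hasDerivWithinAt_nonpos (convex_Icc 0 1)
      (fun t _ => (hφ t).continuousAt.continuousWithinAt)
      (fun t _ => (hφ t).hasDerivWithinAt) hφ'
  have h01 := hanti (left_mem_Icc.mpr zero_le_one) (right_mem_Icc.mpr zero_le_one) zero_le_one
  simp only [φ, zero_smul, add_zero, one_smul, v, add_sub_cancel] at h01
  linarith

theorem ConvexOn.add_inner_add_norm_sq_div_le (hf : ConvexOn ℝ univ f)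
    (hgrad : ∀ x, HasGradientAt f (f' x) x) (hL : 0 < L)
    (hlip : ∀ x y, ‖f' x - f' y‖ ≤ L * ‖x - y‖) (x y : E) :
    f y + ⟪f' y, x - y⟫ + ‖f' x - f' y‖ ^ 2 / (2 * L) ≤ f x := by
  set d := f' x - f' y
  set z := x - L⁻¹ • d
  have hlower := hf.add_inner_sub_le (hgrad y) z
  have hupper := le_add_inner_add_of_lipschitz_gradient hgrad hlip x z
  have hzy : z - y = (x - y) - L⁻¹ • d := by simp only [z]; abel
  have hzx : z - x = -(L⁻¹ • d) := by simp only [z]; abel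
  rw [hzy, inner_sub_right, real_inner_smul_right] at hlower
  rw [hzx, inner_neg_right, real_inner_smul_right, norm_neg, norm_smul, mul_pow,
    Real.norm_eq_abs, sq_abs] at hupper
  have hd : L⁻¹ * ⟪f' x, d⟫ - L⁻¹ * ⟪f' y, d⟫ = L⁻¹ * ‖d‖ ^ 2 := by
    rw [← mul_sub, ← inner_sub_left, real_inner_self_eq_norm_sq]
  have hquad : L / 2 * (L⁻¹ ^ 2 * ‖d‖ ^ 2) = L⁻¹ * ‖d‖ ^ 2 - ‖d‖ ^ 2 / (2 * L) := by
    field_simp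
    ring
  linarith

theorem ConvexOn.norm_sq_gradient_sub_le_mul_inner (hf : ConvexOn ℝ univ f)
    (hgrad : ∀ x, HasGradientAt f (f' x) x) (hL : 0 < L)
    (hlip : ∀ x y, ‖f' x - f' y‖ ≤ L * ‖x - y‖) (x y : E) :
    ‖f' x - f' y‖ ^ 2 ≤ L * ⟪f' x - f' y, x - y⟫ := by
  have hxy := hf.add_inner_add_norm_sq_div_le hgrad hL hlip x y
  have hyx := hf.add_inner_add_norm_sq_div_le hgrad hL hlip y x
  rw [norm_sub_rev (f' y)] at hyx
  have hinner : ⟪f' x - f' y, x - y⟫ = -(⟪f' y, x - y⟫ + ⟪f' x, y - x⟫) := by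
    rw [← neg_sub x y, inner_neg_right, inner_sub_left]
    ring
  have hhalf : ‖f' x - f' y‖ ^ 2 / L = 2 * (‖f' x - f' y‖ ^ 2 / (2 * L)) := by
    field_simp
  rw [← div_le_iff₀' hL]
  linarith

theorem grad_step_nonexpansive {n : ℕ} (g : EuclideanSpace ℝ (Fin n) → ℝ)
    (g' : EuclideanSpace ℝ (Fin n) → EuclideanSpace ℝ (Fin n)) (L : ℝ) (hL : 0 < L)
    (hconv : ConvexOn ℝ Set.univ g)
    (hgrad : ∀ x, HasGradientAt g (g' x) x)
    (hlip : ∀ x y, ‖g' x - g' y‖ ≤ L * ‖x - y‖) :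
    ∀ x y : EuclideanSpace ℝ (Fin n),
      ‖(x - (2 / L) • g' x) - (y - (2 / L) • g' y)‖ ≤ ‖x - y‖ := by
  intro x y
  have hstep : (x - (2 / L) • g' x) - (y - (2 / L) • g' y)
      = (x - y) - (2 / L) • (g' x - g' y) := by
    rw [smul_sub]
    abel
  rw [hstep]
  exact norm_sub_two_div_smul_le hL (hconv.norm_sq_gradient_sub_le_mul_inner hgrad hL hlip x y)
end

section
/- Let g : ℝⁿ → ℝ be convex differentiable with L-Lipschitz gradient, D : ℝⁿ → ℝⁿ nonexpansive, τ > 0, and define G = ∇g + τ(I - D). Then I - (2/(L+2τ))G is nonexpansive, and consequently G is 1/(L+2τ)-cocoercive. -/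
/-!
Convexity and the descent lemma for `g` combine (Baillon–Haddad) into `1/L`-cocoercivity of
`∇g`, i.e. nonexpansiveness of `I - (2/L)∇g`. With `θ = L/(L + 2τ)`,
`I - (2/(L + 2τ))G = θ (I - (2/L)∇g) + (1 - θ) D` is a convex combination of nonexpansive maps,
hence nonexpansive; and for any `c > 0`, `I - cT` is nonexpansive exactly when `T` is
`c/2`-cocoercive, as one sees by expanding `‖(x - y) - c (Tx - Ty)‖²`.
-/

open RealInnerProductSpace Set

theorem norm_sub_smul_sub_le_iff {F : Type*} [NormedAddCommGroup F] [InnerProductSpace ℝ F]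
    {c : ℝ} (hc : 0 < c) (T : F → F) (x y : F) :
    ‖(x - c • T x) - (y - c • T y)‖ ≤ ‖x - y‖ ↔ c / 2 * ‖T x - T y‖ ^ 2 ≤ ⟪T x - T y, x - y⟫ := by
  rw [sub_sub_sub_comm, ← smul_sub, ← sq_le_sq₀ (norm_nonneg _) (norm_nonneg _),
    norm_sub_sq_real, norm_smul, Real.norm_eq_abs, abs_of_pos hc, real_inner_smul_right,
    real_inner_comm]
  constructor <;> intro h <;> nlinarith

section Gradient

variable {F : Type*} [NormedAddCommGroup F] [InnerProductSpace ℝ F] [CompleteSpace F]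
  {g : F → ℝ}

theorem HasGradientAt.hasDerivAt_comp_line {a x v : F} {t : ℝ}
    (h : HasGradientAt g a (x + t • v)) :
    HasDerivAt (fun s : ℝ => g (x + s • v)) ⟪a, v⟫ t := by
  have hline : HasDerivAt (fun s : ℝ => x + s • v) v t := by
    simpa using ((hasDerivAt_id t).smul_const v).const_add x
  simpa [Function.comp_def, InnerProductSpace.toDual_apply_apply] using
    h.hasFDerivAt.comp_hasDerivAt t hline

theorem ConvexOn.add_inner_gradient_le (hconv : ConvexOn ℝ univ g) {a x : F}
    (hx : HasGradientAt g a x) (y : F) : g x + ⟪a, y - x⟫ ≤ g y := by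
  have hline : ConvexOn ℝ univ (fun s : ℝ => g (x + s • (y - x))) := by
    simpa [Function.comp_def, AffineMap.lineMap_apply_module', add_comm] using
      hconv.comp_affineMap (AffineMap.lineMap x y)
  have hderiv : HasDerivAt (fun s : ℝ => g (x + s • (y - x))) ⟪a, y - x⟫ 0 :=
    HasGradientAt.hasDerivAt_comp_line (by simpa using hx)
  have hslope := hline.le_slope_of_hasDerivAt (mem_univ 0) (mem_univ 1) zero_lt_one hderiv
  simp only [slope_def_field, one_smul, add_sub_cancel, zero_smul, add_zero, sub_zero,
    div_one] at hslope
  linarith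

variable {g' : F → F} {L : ℝ}

theorem le_add_inner_gradient_add_sq (hgrad : ∀ x, HasGradientAt g (g' x) x)
    (hlip : ∀ x y, ‖g' x - g' y‖ ≤ L * ‖x - y‖) (x y : F) :
    g y ≤ g x + ⟪g' x, y - x⟫ + L / 2 * ‖y - x‖ ^ 2 := by
  set v := y - x
  set ψ : ℝ → ℝ := fun t => g (x + t • v) - t * ⟪g' x, v⟫ - L / 2 * t ^ 2 * ‖v‖ ^ 2
  have hψ : ∀ t, HasDerivAt ψ (⟪g' (x + t • v) - g' x, v⟫ - L * t * ‖v‖ ^ 2) t := by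
    intro t
    have hsq : HasDerivAt (fun s : ℝ => L / 2 * s ^ 2 * ‖v‖ ^ 2) (L * t * ‖v‖ ^ 2) t :=
      (((hasDerivAt_pow 2 t).const_mul (L / 2)).mul_const (‖v‖ ^ 2)).congr_deriv
        (by push_cast; ring)
    exact ((((hgrad _).hasDerivAt_comp_line).sub
      ((hasDerivAt_id t).mul_const ⟪g' x, v⟫)).sub hsq).congr_deriv (by simp [inner_sub_left])
  have hanti : AntitoneOn ψ (Ici 0) := by
    refine antitoneOn_of_hasDerivWithinAt_nonpos (convex_Ici 0)
      (fun t _ => (hψ t).continuousAt.continuousWithinAt) (fun t _ => (hψ t).hasDerivWithinAt)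
      fun t ht => ?_
    rw [interior_Ici] at ht
    have hstep : ‖g' (x + t • v) - g' x‖ ≤ L * (t * ‖v‖) := by
      simpa [norm_smul, abs_of_pos ht.out] using hlip (x + t • v) x
    nlinarith [real_inner_le_norm (g' (x + t • v) - g' x) v, norm_nonneg v]
  have hmono := hanti self_mem_Ici (show (1 : ℝ) ∈ Ici 0 by simp) zero_le_one
  simp only [ψ, v, one_smul, add_sub_cancel, one_mul, one_pow, mul_one, zero_smul, add_zero,
    zero_mul, sub_zero, ne_eq, OfNat.ofNat_ne_zero, not_false_eq_true, zero_pow, mul_zero] at hmono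
  linarith

theorem ConvexOn.add_inner_gradient_add_sq_le (hL : 0 < L) (hconv : ConvexOn ℝ univ g)
    (hgrad : ∀ x, HasGradientAt g (g' x) x)
    (hlip : ∀ x y, ‖g' x - g' y‖ ≤ L * ‖x - y‖) (x y : F) :
    g x + ⟪g' x, y - x⟫ + 1 / (2 * L) * ‖g' y - g' x‖ ^ 2 ≤ g y := by
  set u := g' y - g' x
  -- `z` is the gradient step from `y` for `g - ⟪g' x, ·⟫`, a function minimised at `x`.
  set z := y - (1 / L) • u
  have hdescent := le_add_inner_gradient_add_sq hgrad hlip y z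
  have hsupport := hconv.add_inner_gradient_le (hgrad x) z
  have hzy : z - y = -((1 / L) • u) := by simp [z]
  have hzx : z - x = (y - x) - (1 / L) • u := by simp only [z]; abel
  rw [hzy, inner_neg_right, real_inner_smul_right, norm_neg, norm_smul, Real.norm_eq_abs,
    abs_of_pos (by positivity)] at hdescent
  rw [hzx, inner_sub_right, real_inner_smul_right] at hsupport
  have hu : 1 / L * ⟪g' y, u⟫ - 1 / L * ⟪g' x, u⟫ = 1 / L * ‖u‖ ^ 2 := by
    rw [← mul_sub, ← inner_sub_left, real_inner_self_eq_norm_sq]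
  have hquad : L / 2 * (1 / L * ‖u‖) ^ 2 = 1 / (2 * L) * ‖u‖ ^ 2 := by field_simp
  have hhalf : 1 / L * ‖u‖ ^ 2 - 1 / (2 * L) * ‖u‖ ^ 2 = 1 / (2 * L) * ‖u‖ ^ 2 := by
    field_simp; ring
  linarith

theorem ConvexOn.gradient_cocoercive (hL : 0 < L) (hconv : ConvexOn ℝ univ g)
    (hgrad : ∀ x, HasGradientAt g (g' x) x)
    (hlip : ∀ x y, ‖g' x - g' y‖ ≤ L * ‖x - y‖) (x y : F) :
    1 / L * ‖g' x - g' y‖ ^ 2 ≤ ⟪g' x - g' y, x - y⟫ := by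
  have hxy := hconv.add_inner_gradient_add_sq_le hL hgrad hlip x y
  have hyx := hconv.add_inner_gradient_add_sq_le hL hgrad hlip y x
  have hinner : ⟪g' x, y - x⟫ + ⟪g' y, x - y⟫ = -⟪g' x - g' y, x - y⟫ := by
    rw [← neg_sub x y, inner_neg_right, inner_sub_left]
    ring
  rw [norm_sub_rev] at hyx
  have hsum : 1 / (2 * L) * ‖g' y - g' x‖ ^ 2 + 1 / (2 * L) * ‖g' y - g' x‖ ^ 2
      = 1 / L * ‖g' y - g' x‖ ^ 2 := by
    field_simp
    ring
  rw [norm_sub_rev]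
  linarith

theorem ConvexOn.norm_sub_smul_gradient_sub_le (hL : 0 < L) (hconv : ConvexOn ℝ univ g)
    (hgrad : ∀ x, HasGradientAt g (g' x) x)
    (hlip : ∀ x y, ‖g' x - g' y‖ ≤ L * ‖x - y‖) (x y : F) :
    ‖(x - (2 / L) • g' x) - (y - (2 / L) • g' y)‖ ≤ ‖x - y‖ :=
  (norm_sub_smul_sub_le_iff (by positivity) g' x y).2 <| by
    rw [show 2 / L / 2 = 1 / L by ring]
    exact hconv.gradient_cocoercive hL hgrad hlip x y

theorem ConvexOn.norm_forward_step_sub_le {τ : ℝ} {D G : F → F} (hL : 0 < L) (hτ : 0 < τ)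
    (hconv : ConvexOn ℝ univ g) (hgrad : ∀ x, HasGradientAt g (g' x) x)
    (hlip : ∀ x y, ‖g' x - g' y‖ ≤ L * ‖x - y‖) (hD : ∀ x y, ‖D x - D y‖ ≤ ‖x - y‖)
    (hG : ∀ x, G x = g' x + τ • (x - D x)) (x y : F) :
    ‖(x - (2 / (L + 2 * τ)) • G x) - (y - (2 / (L + 2 * τ)) • G y)‖ ≤ ‖x - y‖ := by
  set θ := L / (L + 2 * τ)
  have hθ : 0 ≤ θ ∧ 0 ≤ 1 - θ :=
    ⟨by positivity, by rw [sub_nonneg, div_le_one (by positivity)]; linarith⟩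
  have hsplit : (x - (2 / (L + 2 * τ)) • G x) - (y - (2 / (L + 2 * τ)) • G y)
      = θ • ((x - (2 / L) • g' x) - (y - (2 / L) • g' y)) + (1 - θ) • (D x - D y) := by
    simp only [hG, θ]
    match_scalars <;> field_simp <;> ring
  calc _ ≤ θ * ‖(x - (2 / L) • g' x) - (y - (2 / L) • g' y)‖ + (1 - θ) * ‖D x - D y‖ := by
        rw [hsplit, ← norm_smul_of_nonneg hθ.1, ← norm_smul_of_nonneg hθ.2]
        exact norm_add_le _ _
    _ ≤ θ * ‖x - y‖ + (1 - θ) * ‖x - y‖ :=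
        add_le_add
          (mul_le_mul_of_nonneg_left (hconv.norm_sub_smul_gradient_sub_le hL hgrad hlip x y) hθ.1)
          (mul_le_mul_of_nonneg_left (hD x y) hθ.2)
    _ = ‖x - y‖ := by ring

end Gradient

theorem msred_operator_cocoercive {n : ℕ} (g : EuclideanSpace ℝ (Fin n) → ℝ)
    (g' D : EuclideanSpace ℝ (Fin n) → EuclideanSpace ℝ (Fin n)) (L τ : ℝ)
    (hL : 0 < L) (hτ : 0 < τ)
    (hconv : ConvexOn ℝ Set.univ g)
    (hgrad : ∀ x, HasGradientAt g (g' x) x)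
    (hlip : ∀ x y, ‖g' x - g' y‖ ≤ L * ‖x - y‖)
    (hD : ∀ x y, ‖D x - D y‖ ≤ ‖x - y‖)
    (G : EuclideanSpace ℝ (Fin n) → EuclideanSpace ℝ (Fin n))
    (hG : ∀ x, G x = g' x + τ • (x - D x)) :
    (∀ x y : EuclideanSpace ℝ (Fin n),
      ‖(x - (2 / (L + 2 * τ)) • G x) - (y - (2 / (L + 2 * τ)) • G y)‖ ≤ ‖x - y‖) ∧
    (∀ x y : EuclideanSpace ℝ (Fin n),
      (1 / (L + 2 * τ)) * ‖G x - G y‖ ^ 2 ≤ ⟪G x - G y, x - y⟫) := by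
  have hstep := hconv.norm_forward_step_sub_le hL hτ hgrad hlip hD hG
  refine ⟨hstep, fun x y => ?_⟩
  have hcoco := (norm_sub_smul_sub_le_iff (by positivity) G x y).1 (hstep x y)
  rwa [show 2 / (L + 2 * τ) / 2 = 1 / (L + 2 * τ) by ring] at hcoco
end
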